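/- arXiv:2601.01731 — 2 statements merged into one kernel-verified Lean document; each statement's English description precedes it below -/
import Mathlib

section
/- On the Cartesian torus grid, let κ > 0, Δt > 0, let B : [0,∞) → ℝ be continuous with 0 < B(s) ≤ 1 for all s ≥ 0, let p : G → ℝ, and let u⁰ : G → [0,∞) be such that u⁰(L) > 0 for at least one cell L. Then the linear discrete Fokker–Planck system m(K)·(u(K) − u⁰(K))/Δt + ∑_{σ∈E_K} F_{K,σ}[u,p] = 0 (for all K ∈ G) has a unique solution u : G → ℝ; moreover u(K) > 0 for every cell K ∈ G, and mass is conserved: ∑_{K∈G} m(K)·u(K) = ∑_{K∈G} m(K)·u⁰(K). -/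
open MeasureTheory Real Finset

namespace SG

instance : Fact ((0:ℝ) < 1) := ⟨one_pos⟩

variable {d : ℕ}

/-- Cells of the Cartesian torus grid. -/
abbrev Cell (M : Fin d → ℕ) := ∀ ℓ : Fin d, ZMod (M ℓ)

/-- Cell measure `m(K) = Δx₁⋯Δx_d`. -/
noncomputable def mK (M : Fin d → ℕ) : ℝ := ∏ ℓ, ((M ℓ : ℝ))⁻¹

/-- Transmissibility coefficient of an edge in direction `ℓ`:
`τ_σ = m(σ)/d_σ = m(K)·M_ℓ²`. -/
noncomputable def τ (M : Fin d → ℕ) (ℓ : Fin d) : ℝ := mK M * (M ℓ : ℝ) ^ 2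

/-- Shift a cell by `s` in direction `ℓ` (mod `M ℓ`). -/
def shift (M : Fin d → ℕ) (K : Cell M) (ℓ : Fin d) (s : ℤ) : Cell M :=
  Function.update K ℓ (K ℓ + (s : ZMod (M ℓ)))

/-- Hypothesis (H2): `B` is continuous on `[0,∞)` with `0 < B(s) ≤ 1` for `s ≥ 0`. -/
def H2 (B : ℝ → ℝ) : Prop :=
  ContinuousOn B (Set.Ici 0) ∧ ∀ s : ℝ, 0 ≤ s → 0 < B s ∧ B s ≤ 1

/-- Hypothesis (H3): `α ∈ [0,1)` and `B(s) ≥ 1 − α·s` for all `s ≥ 0`. -/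
def H3 (B : ℝ → ℝ) (α : ℝ) : Prop :=
  0 ≤ α ∧ α < 1 ∧ ∀ s : ℝ, 0 ≤ s → 1 - α * s ≤ B s

/-- The scaled weight function `B_κ(s) = κ·B(s/κ)`. -/
noncomputable def Bk (κ : ℝ) (B : ℝ → ℝ) (s : ℝ) : ℝ := κ * B (s / κ)

/-- Upwind value on the (oriented) edge from `K` to `L`. -/
noncomputable def upw {M : Fin d → ℕ} (u p : Cell M → ℝ) (K L : Cell M) : ℝ :=
  if 0 ≤ p L - p K then u L else u K

/-- Numerical flux `F_{K,σ}[u,p]` from `K` through the edge (in direction `ℓ`) to its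
neighbor `L`. -/
noncomputable def flux (M : Fin d → ℕ) (κ : ℝ) (B : ℝ → ℝ) (u p : Cell M → ℝ)
    (ℓ : Fin d) (K L : Cell M) : ℝ :=
  -(τ M ℓ) * (Bk κ B |p L - p K| * (u L - u K) + upw u p K L * (p L - p K))

/-- Sum of the numerical fluxes over the `2d` edges incident to `K`. -/
noncomputable def fluxSum (M : Fin d → ℕ) (κ : ℝ) (B : ℝ → ℝ) (u p : Cell M → ℝ)
    (K : Cell M) : ℝ :=
  ∑ ℓ : Fin d, (flux M κ B u p ℓ K (shift M K ℓ 1) + flux M κ B u p ℓ K (shift M K ℓ (-1)))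

/-- One implicit Euler finite-volume step with prescribed potential `p`. -/
def Step (M : Fin d → ℕ) (κ Δt : ℝ) (B : ℝ → ℝ) (uPrev u p : Cell M → ℝ) : Prop :=
  ∀ K : Cell M, mK M * (u K - uPrev K) / Δt + fluxSum M κ B u p K = 0

/-- Discrete Boltzmann entropy. -/
noncomputable def HB (M : Fin d → ℕ) [∀ ℓ, NeZero (M ℓ)] {n : ℕ}
    (u : Fin n → Cell M → ℝ) : ℝ :=
  ∑ i, ∑ K : Cell M, mK M * (u i K * (Real.log (u i K) - 1))

/-- Discrete Rao entropy associated to discrete kernels `Wd`. -/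
noncomputable def HR (M : Fin d → ℕ) [∀ ℓ, NeZero (M ℓ)] {n : ℕ}
    (Wd : Fin n → Fin n → Cell M → Cell M → ℝ) (u : Fin n → Cell M → ℝ) : ℝ :=
  (1/2) * ∑ i, ∑ j, ∑ K : Cell M, ∑ J : Cell M,
    mK M * mK M * Wd i j K J * u i K * u j J

/-- Boltzmann entropy production term `P_B`. -/
noncomputable def PB (M : Fin d → ℕ) [∀ ℓ, NeZero (M ℓ)] {n : ℕ} (κ : ℝ) (B : ℝ → ℝ)
    (u p : Fin n → Cell M → ℝ) : ℝ :=
  4 * ∑ i, ∑ K : Cell M, ∑ ℓ : Fin d,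
    τ M ℓ * Bk κ B |p i (shift M K ℓ 1) - p i K| *
      (Real.sqrt (u i (shift M K ℓ 1)) - Real.sqrt (u i K)) ^ 2

/-- Rao entropy production term `P_R`. -/
noncomputable def PR (M : Fin d → ℕ) [∀ ℓ, NeZero (M ℓ)] {n : ℕ}
    (u p : Fin n → Cell M → ℝ) : ℝ :=
  ∑ i, ∑ K : Cell M, ∑ ℓ : Fin d,
    τ M ℓ * upw (u i) (p i) K (shift M K ℓ 1) * (p i (shift M K ℓ 1) - p i K) ^ 2

/-- Cross term `X(u,p)`. -/
noncomputable def Xc (M : Fin d → ℕ) [∀ ℓ, NeZero (M ℓ)] {n : ℕ}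
    (u p : Fin n → Cell M → ℝ) : ℝ :=
  ∑ i, ∑ K : Cell M, ∑ ℓ : Fin d,
    τ M ℓ * (p i (shift M K ℓ 1) - p i K) * (u i (shift M K ℓ 1) - u i K)

/-- Discrete Fisher information `∑_i ∑_σ τ_σ |D_σ √u_i|²`. -/
noncomputable def Fisher (M : Fin d → ℕ) [∀ ℓ, NeZero (M ℓ)] {n : ℕ}
    (u : Fin n → Cell M → ℝ) : ℝ :=
  ∑ i, ∑ K : Cell M, ∑ ℓ : Fin d,
    τ M ℓ * (Real.sqrt (u i (shift M K ℓ 1)) - Real.sqrt (u i K)) ^ 2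

/-- The torus `T^d = (ℝ/ℤ)^d`. -/
abbrev Td (d : ℕ) := Fin d → AddCircle (1 : ℝ)

/-- The box `Q_K ⊆ T^d` corresponding to the cell `K`. -/
noncomputable def QK (M : Fin d → ℕ) (K : Cell M) : Set (Td d) :=
  Set.univ.pi fun ℓ => (fun t : ℝ => (t : AddCircle (1 : ℝ))) ''
    Set.Ico (((K ℓ).val : ℝ) / (M ℓ)) ((((K ℓ).val : ℝ) + 1) / (M ℓ))

/-- The discrete kernel `W_{KJ} = (m(K)m(J))⁻¹ ∫_{Q_K}∫_{Q_J} W(x−y) dy dx`. -/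
noncomputable def Wdisc (M : Fin d → ℕ) (W : Td d → ℝ) (K J : Cell M) : ℝ :=
  (mK M * mK M)⁻¹ * ∫ x in QK M K, ∫ y in QK M J, W (x - y)

/-- The discrete nonlocal potential `p_i(K) = ∑_j ∑_J m(J)·Wd^{ij}_{KJ}·u_j(J)`. -/
noncomputable def pot (M : Fin d → ℕ) [∀ ℓ, NeZero (M ℓ)] {n : ℕ}
    (Wd : Fin n → Fin n → Cell M → Cell M → ℝ) (u : Fin n → Cell M → ℝ)
    (i : Fin n) (K : Cell M) : ℝ :=
  ∑ j, ∑ J : Cell M, mK M * Wd i j K J * u j J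

/-- Discrete `L^q` norm of a cell function. -/
noncomputable def normq (M : Fin d → ℕ) [∀ ℓ, NeZero (M ℓ)] (q : ℝ)
    (u : Cell M → ℝ) : ℝ :=
  (∑ K : Cell M, mK M * |u K| ^ q) ^ (1/q)

/-- Discrete `L^q` norm of an edge function (dual-cell measure `m(Δ_σ) = m(σ)·d_σ = m(K)`). -/
noncomputable def enorm (M : Fin d → ℕ) [∀ ℓ, NeZero (M ℓ)] (q : ℝ)
    (w : Cell M → Fin d → ℝ) : ℝ :=
  (∑ K : Cell M, ∑ ℓ : Fin d, mK M * |w K ℓ| ^ q) ^ (1/q)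

/-- Magnitude of the discrete gradient on the edge `(K,ℓ)`:
`|∇^h_σ v| = d·D_σ v/d_σ`. -/
noncomputable def gradh (M : Fin d → ℕ) (v : Cell M → ℝ) (K : Cell M) (ℓ : Fin d) : ℝ :=
  d * (M ℓ : ℝ) * |v (shift M K ℓ 1) - v K|


section Aux

variable (M : Fin d → ℕ)

lemma mK_pos [∀ ℓ, NeZero (M ℓ)] : 0 < mK M := by
  unfold mK
  apply Finset.prod_pos
  intro ℓ _
  have := NeZero.pos (M ℓ)
  positivity

lemma tau_pos [∀ ℓ, NeZero (M ℓ)] (ℓ : Fin d) : 0 < τ M ℓ := by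
  unfold τ
  have h1 := mK_pos M
  have h2 := NeZero.pos (M ℓ)
  positivity

lemma Bk_pos {κ : ℝ} {B : ℝ → ℝ} (hκ : 0 < κ) (hB : H2 B) {s : ℝ} (hs : 0 ≤ s) :
    0 < Bk κ B s :=
  mul_pos hκ ((hB.2 (s / κ) (div_nonneg hs hκ.le)).1)

lemma shift_shift (K : Cell M) (ℓ : Fin d) (a b : ℤ) :
    shift M (shift M K ℓ a) ℓ b = shift M K ℓ (a + b) := by
  funext j
  rcases eq_or_ne j ℓ with rfl | h
  · simp [shift, add_assoc]
  · simp [shift, Function.update_of_ne h]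

lemma shift_zero (K : Cell M) (ℓ : Fin d) : shift M K ℓ 0 = K := by
  funext j
  rcases eq_or_ne j ℓ with rfl | h
  · simp [shift]
  · simp [shift, Function.update_of_ne h]

/-- Shifting by one in direction `ℓ`, as an equivalence. -/
def shiftEquiv (ℓ : Fin d) : Cell M ≃ Cell M where
  toFun K := shift M K ℓ 1
  invFun K := shift M K ℓ (-1)
  left_inv K := by
    show shift M (shift M K ℓ 1) ℓ (-1) = K
    rw [shift_shift]; norm_num [shift_zero]
  right_inv K := by
    show shift M (shift M K ℓ (-1)) ℓ 1 = K
    rw [shift_shift]; norm_num [shift_zero]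

lemma flux_antisymm (κ : ℝ) (B : ℝ → ℝ) (u p : Cell M → ℝ) (ℓ : Fin d) (K L : Cell M) :
    flux M κ B u p ℓ L K = - flux M κ B u p ℓ K L := by
  unfold flux upw
  rw [abs_sub_comm (p K) (p L)]
  split_ifs with h1 h2 h2
  · have h3 : p K - p L = 0 := by linarith
    linear_combination (-(τ M ℓ) * (u K - u L)) * h3
  · ring
  · ring
  · linarith

lemma flux_neg_of [∀ ℓ, NeZero (M ℓ)] {κ : ℝ} {B : ℝ → ℝ} (hκ : 0 < κ) (hB : H2 B)
    (u p : Cell M → ℝ) (ℓ : Fin d) {K L : Cell M}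
    (hK : u K ≤ 0) (hL : 0 ≤ u L) (hne : u K < u L) :
    flux M κ B u p ℓ K L < 0 := by
  unfold flux
  have hτ := tau_pos M ℓ
  have hBk := Bk_pos hκ hB (abs_nonneg (p L - p K))
  have h1 : 0 < Bk κ B |p L - p K| * (u L - u K) := mul_pos hBk (by linarith)
  have h2 : 0 ≤ upw u p K L * (p L - p K) := by
    unfold upw
    split_ifs with h
    · exact mul_nonneg hL h
    · have h4 : p L - p K ≤ 0 := by linarith
      nlinarith
  nlinarith

lemma flux_pos_of [∀ ℓ, NeZero (M ℓ)] {κ : ℝ} {B : ℝ → ℝ} (hκ : 0 < κ) (hB : H2 B)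
    (u p : Cell M → ℝ) (ℓ : Fin d) {K L : Cell M}
    (hL : u L ≤ 0) (hK : 0 ≤ u K) (hne : u L < u K) :
    0 < flux M κ B u p ℓ K L := by
  have := flux_neg_of M hκ hB u p ℓ hL hK hne
  rw [flux_antisymm] at this
  linarith

lemma sum_weighted_fluxSum [∀ ℓ, NeZero (M ℓ)] (κ : ℝ) (B : ℝ → ℝ) (u p : Cell M → ℝ) (χ : Cell M → ℝ) :
    ∑ K : Cell M, χ K * fluxSum M κ B u p K
    = ∑ ℓ : Fin d, ∑ K : Cell M,
        (χ K - χ (shift M K ℓ 1)) * flux M κ B u p ℓ K (shift M K ℓ 1) := by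
  unfold fluxSum
  simp only [Finset.mul_sum]
  rw [Finset.sum_comm]
  refine Finset.sum_congr rfl fun ℓ _ => ?_
  have hrev : ∑ K : Cell M, χ K * flux M κ B u p ℓ K (shift M K ℓ (-1))
      = ∑ K : Cell M, -(χ (shift M K ℓ 1) * flux M κ B u p ℓ K (shift M K ℓ 1)) := by
    rw [← Equiv.sum_comp (shiftEquiv M ℓ)
      (fun K => χ K * flux M κ B u p ℓ K (shift M K ℓ (-1)))]
    refine Finset.sum_congr rfl fun K _ => ?_
    show χ (shift M K ℓ 1) * flux M κ B u p ℓ (shift M K ℓ 1) (shift M (shift M K ℓ 1) ℓ (-1)) = _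
    rw [shift_shift]
    norm_num [shift_zero]
    rw [flux_antisymm]
    ring
  calc ∑ K : Cell M, χ K * (flux M κ B u p ℓ K (shift M K ℓ 1)
          + flux M κ B u p ℓ K (shift M K ℓ (-1)))
      = ∑ K : Cell M, χ K * flux M κ B u p ℓ K (shift M K ℓ 1)
        + ∑ K : Cell M, χ K * flux M κ B u p ℓ K (shift M K ℓ (-1)) := by
        rw [← Finset.sum_add_distrib]
        exact Finset.sum_congr rfl fun K _ => by ring
    _ = ∑ K : Cell M, χ K * flux M κ B u p ℓ K (shift M K ℓ 1)
        + ∑ K : Cell M, -(χ (shift M K ℓ 1) * flux M κ B u p ℓ K (shift M K ℓ 1)) := by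
        rw [hrev]
    _ = _ := by
        rw [← Finset.sum_add_distrib]
        refine Finset.sum_congr rfl fun K _ => by ring

lemma total_fluxSum [∀ ℓ, NeZero (M ℓ)] (κ : ℝ) (B : ℝ → ℝ) (u p : Cell M → ℝ) :
    ∑ K : Cell M, fluxSum M κ B u p K = 0 := by
  have h := sum_weighted_fluxSum M κ B u p (fun _ => 1)
  simpa using h

lemma step_iff [∀ ℓ, NeZero (M ℓ)] {κ Δt : ℝ} {B : ℝ → ℝ} {u0 u p : Cell M → ℝ}
    (hΔt : 0 < Δt) :
    Step M κ Δt B u0 u p ↔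
      ∀ K, mK M * (u K - u0 K) = -Δt * fluxSum M κ B u p K := by
  unfold Step
  have hΔt' := hΔt.ne'
  constructor <;> intro h K <;> have hK := h K
  · field_simp at hK
    linarith
  · field_simp
    linarith

lemma step_nonneg [∀ ℓ, NeZero (M ℓ)] {κ Δt : ℝ} {B : ℝ → ℝ} {u0 u p : Cell M → ℝ}
    (hκ : 0 < κ) (hΔt : 0 < Δt) (hB : H2 B)
    (hstep : Step M κ Δt B u0 u p) (hu0 : ∀ K, 0 ≤ u0 K) : ∀ K, 0 ≤ u K := by
  by_contra hcon
  push_neg at hcon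
  obtain ⟨K₀, hK₀⟩ := hcon
  have hm := mK_pos M
  set χ : Cell M → ℝ := fun K => if u K < 0 then 1 else 0 with hχdef
  have hstep' := (step_iff M hΔt).1 hstep
  have hS : ∑ ℓ : Fin d, ∑ K : Cell M,
      (χ K - χ (shift M K ℓ 1)) * flux M κ B u p ℓ K (shift M K ℓ 1) ≤ 0 := by
    refine Finset.sum_nonpos fun ℓ _ => Finset.sum_nonpos fun K _ => ?_
    set L := shift M K ℓ 1
    by_cases h1 : u K < 0 <;> by_cases h2 : u L < 0
    · simp [hχdef, h1, h2]
    · have hf : flux M κ B u p ℓ K L < 0 :=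
        flux_neg_of M hκ hB u p ℓ h1.le (not_lt.1 h2) (lt_of_lt_of_le h1 (not_lt.1 h2))
      simp only [hχdef, h1, h2, if_true, if_false]
      nlinarith
    · have hf : 0 < flux M κ B u p ℓ K L :=
        flux_pos_of M hκ hB u p ℓ h2.le (not_lt.1 h1) (lt_of_lt_of_le h2 (not_lt.1 h1))
      simp only [hχdef, h1, h2, if_true, if_false]
      nlinarith
    · simp [hχdef, h1, h2]
  have hSigeq : ∑ K : Cell M, χ K * (mK M * (u K - u0 K))
      = -Δt * ∑ ℓ : Fin d, ∑ K : Cell M,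
          (χ K - χ (shift M K ℓ 1)) * flux M κ B u p ℓ K (shift M K ℓ 1) := by
    rw [← sum_weighted_fluxSum, Finset.mul_sum]
    refine Finset.sum_congr rfl fun K _ => ?_
    rw [hstep' K]
    ring
  have hSignonneg : 0 ≤ ∑ K : Cell M, χ K * (mK M * (u K - u0 K)) := by
    rw [hSigeq]
    nlinarith
  have hSigneg : ∑ K : Cell M, χ K * (mK M * (u K - u0 K)) < 0 := by
    have : ∑ K : Cell M, χ K * (mK M * (u K - u0 K)) < ∑ _K : Cell M, (0:ℝ) := by
      refine Finset.sum_lt_sum (fun K _ => ?_) ⟨K₀, Finset.mem_univ _, ?_⟩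
      · by_cases h1 : u K < 0
        · simp only [hχdef, h1, if_true, one_mul]
          have := hu0 K
          nlinarith
        · simp [hχdef, h1]
      · simp only [hχdef, hK₀, if_true, one_mul]
        have := hu0 K₀
        nlinarith
    simpa using this
  linarith

lemma torus_reach [∀ ℓ, NeZero (M ℓ)] (Z : Set (Cell M)) (K₀ : Cell M) (hK₀ : K₀ ∈ Z)
    (hcl : ∀ K ∈ Z, ∀ ℓ : Fin d, shift M K ℓ 1 ∈ Z) : ∀ L : Cell M, L ∈ Z := by
  have hnat : ∀ (ℓ : Fin d) (n : ℕ), ∀ K ∈ Z, shift M K ℓ (n : ℤ) ∈ Z := by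
    intro ℓ n
    induction n with
    | zero => intro K hK; simpa [shift_zero] using hK
    | succ n ih =>
      intro K hK
      have h1 := hcl _ (ih K hK) ℓ
      rw [shift_shift] at h1
      have h2 : ((n + 1 : ℕ) : ℤ) = (n : ℤ) + 1 := by push_cast; ring
      rw [h2]
      exact h1
  have hzmod : ∀ (ℓ : Fin d) (c : ZMod (M ℓ)), ∀ K ∈ Z,
      Function.update K ℓ (K ℓ + c) ∈ Z := by
    intro ℓ c K hK
    have h1 := hnat ℓ (ZMod.val c) K hK
    unfold shift at h1
    rwa [Int.cast_natCast, ZMod.natCast_val, ZMod.cast_id] at h1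
  have key : ∀ (s : Finset (Fin d)) (L : Cell M), (∀ ℓ ∉ s, L ℓ = K₀ ℓ) → L ∈ Z := by
    intro s
    induction s using Finset.induction_on with
    | empty =>
      intro L hL
      have : L = K₀ := funext fun ℓ => hL ℓ (Finset.notMem_empty ℓ)
      rwa [this]
    | @insert ℓ s hℓs ih =>
      intro L hL
      have hL' : Function.update L ℓ (K₀ ℓ) ∈ Z := by
        refine ih _ fun j hj => ?_
        rcases eq_or_ne j ℓ with rfl | hne
        · simp
        · rw [Function.update_of_ne hne]
          exact hL j (by simp [hj, hne])
      have h2 := hzmod ℓ (L ℓ - K₀ ℓ) _ hL'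
      have h3 : Function.update (Function.update L ℓ (K₀ ℓ)) ℓ
          (Function.update L ℓ (K₀ ℓ) ℓ + (L ℓ - K₀ ℓ)) = L := by
        funext j
        rcases eq_or_ne j ℓ with rfl | hne
        · simp
        · simp [Function.update_of_ne hne]
      rwa [h3] at h2
  intro L
  exact key Finset.univ L (fun ℓ hℓ => absurd (Finset.mem_univ ℓ) hℓ)

lemma step_pos [∀ ℓ, NeZero (M ℓ)] {κ Δt : ℝ} {B : ℝ → ℝ} {u0 u p : Cell M → ℝ}
    (hκ : 0 < κ) (hΔt : 0 < Δt) (hB : H2 B)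
    (hstep : Step M κ Δt B u0 u p) (hu0 : ∀ K, 0 ≤ u0 K) (hu0pos : ∃ L, 0 < u0 L) :
    ∀ K, 0 < u K := by
  have hn := step_nonneg M hκ hΔt hB hstep hu0
  by_contra hcon
  push_neg at hcon
  obtain ⟨K₀, hK₀⟩ := hcon
  have hK0 : u K₀ = 0 := le_antisymm hK₀ (hn K₀)
  have hm := mK_pos M
  set ζ : Cell M → ℝ := fun K => if u K = 0 then 1 else 0 with hζdef
  have hstep' := (step_iff M hΔt).1 hstep
  -- termwise sign facts
  have htermS : ∀ (ℓ : Fin d) (K : Cell M),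
      (ζ K - ζ (shift M K ℓ 1)) * flux M κ B u p ℓ K (shift M K ℓ 1) ≤ 0 := by
    intro ℓ K
    set L := shift M K ℓ 1
    by_cases h1 : u K = 0 <;> by_cases h2 : u L = 0
    · simp [hζdef, h1, h2]
    · have hf : flux M κ B u p ℓ K L < 0 :=
        flux_neg_of M hκ hB u p ℓ h1.le (hn L) (by
          rcases lt_or_eq_of_le (hn L) with h | h
          · rw [h1]; exact h
          · exact absurd h.symm h2)
      simp only [hζdef, h1, h2, if_true, if_false]
      nlinarith
    · have hf : 0 < flux M κ B u p ℓ K L :=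
        flux_pos_of M hκ hB u p ℓ h2.le (hn K) (by
          rcases lt_or_eq_of_le (hn K) with h | h
          · rw [h2]; exact h
          · exact absurd h.symm h1)
      simp only [hζdef, h1, h2, if_true, if_false]
      nlinarith
    · simp [hζdef, h1, h2]
  have htermSig : ∀ K : Cell M, ζ K * (mK M * (u K - u0 K)) ≤ 0 := by
    intro K
    by_cases h1 : u K = 0
    · simp only [hζdef, h1, if_true, one_mul]
      have := hu0 K
      nlinarith
    · simp [hζdef, h1]
  have hSigeq : ∑ K : Cell M, ζ K * (mK M * (u K - u0 K))
      = -Δt * ∑ ℓ : Fin d, ∑ K : Cell M,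
          (ζ K - ζ (shift M K ℓ 1)) * flux M κ B u p ℓ K (shift M K ℓ 1) := by
    rw [← sum_weighted_fluxSum, Finset.mul_sum]
    refine Finset.sum_congr rfl fun K _ => ?_
    rw [hstep' K]
    ring
  have hS : ∑ ℓ : Fin d, ∑ K : Cell M,
      (ζ K - ζ (shift M K ℓ 1)) * flux M κ B u p ℓ K (shift M K ℓ 1) ≤ 0 :=
    Finset.sum_nonpos fun ℓ _ => Finset.sum_nonpos fun K _ => htermS ℓ K
  have hSigle : ∑ K : Cell M, ζ K * (mK M * (u K - u0 K)) ≤ 0 :=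
    Finset.sum_nonpos fun K _ => htermSig K
  have hSigge : 0 ≤ ∑ K : Cell M, ζ K * (mK M * (u K - u0 K)) := by
    rw [hSigeq]; nlinarith
  have hSig0 : ∑ K : Cell M, ζ K * (mK M * (u K - u0 K)) = 0 := le_antisymm hSigle hSigge
  have hS0 : ∑ ℓ : Fin d, ∑ K : Cell M,
      (ζ K - ζ (shift M K ℓ 1)) * flux M κ B u p ℓ K (shift M K ℓ 1) = 0 := by
    rw [hSig0] at hSigeq
    rcases mul_eq_zero.1 hSigeq.symm with h | h
    · exact absurd h (neg_ne_zero.2 hΔt.ne')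
    · exact h
  -- each S-term is zero
  have hStermzero : ∀ (ℓ : Fin d) (K : Cell M),
      (ζ K - ζ (shift M K ℓ 1)) * flux M κ B u p ℓ K (shift M K ℓ 1) = 0 := by
    have houter := (Finset.sum_eq_zero_iff_of_nonpos
      (fun ℓ _ => Finset.sum_nonpos fun K _ => htermS ℓ K)).1 hS0
    intro ℓ K
    have hinner := (Finset.sum_eq_zero_iff_of_nonpos
      (fun K _ => htermS ℓ K)).1 (houter ℓ (Finset.mem_univ ℓ))
    exact hinner K (Finset.mem_univ K)
  -- each Σ-term is zero
  have hSigtermzero : ∀ K : Cell M, ζ K * (mK M * (u K - u0 K)) = 0 := by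
    intro K
    exact (Finset.sum_eq_zero_iff_of_nonpos (fun K _ => htermSig K)).1 hSig0 K (Finset.mem_univ K)
  -- the zero set is closed under shifts
  have hclosed : ∀ K : Cell M, u K = 0 → ∀ ℓ : Fin d, u (shift M K ℓ 1) = 0 := by
    intro K hK ℓ
    by_contra hL
    have hf : flux M κ B u p ℓ K (shift M K ℓ 1) < 0 :=
      flux_neg_of M hκ hB u p ℓ hK.le (hn _) (by
        rcases lt_or_eq_of_le (hn (shift M K ℓ 1)) with h | h
        · rw [hK]; exact h
        · exact absurd h.symm hL)
    have := hStermzero ℓ K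
    simp only [hζdef, hK, hL, if_true, if_false] at this
    nlinarith
  have hall : ∀ K : Cell M, u K = 0 :=
    torus_reach M {K | u K = 0} K₀ hK0 (fun K hK ℓ => hclosed K hK ℓ)
  have hu00 : ∀ K : Cell M, u0 K = 0 := by
    intro K
    have h := hSigtermzero K
    simp only [hζdef, hall K, if_true, one_mul] at h
    rcases mul_eq_zero.1 h with h' | h'
    · exact absurd h' hm.ne'
    · linarith
  obtain ⟨L, hL⟩ := hu0pos
  rw [hu00 L] at hL
  exact lt_irrefl _ hL

lemma flux_add (κ : ℝ) (B : ℝ → ℝ) (u v p : Cell M → ℝ) (ℓ : Fin d) (K L : Cell M) :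
    flux M κ B (u + v) p ℓ K L = flux M κ B u p ℓ K L + flux M κ B v p ℓ K L := by
  unfold flux upw
  split_ifs <;> simp only [Pi.add_apply] <;> ring

lemma flux_smul (κ : ℝ) (B : ℝ → ℝ) (c : ℝ) (u p : Cell M → ℝ) (ℓ : Fin d) (K L : Cell M) :
    flux M κ B (c • u) p ℓ K L = c * flux M κ B u p ℓ K L := by
  unfold flux upw
  split_ifs <;> simp only [Pi.smul_apply, smul_eq_mul] <;> ring

lemma fluxSum_add (κ : ℝ) (B : ℝ → ℝ) (u v p : Cell M → ℝ) (K : Cell M) :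
    fluxSum M κ B (u + v) p K = fluxSum M κ B u p K + fluxSum M κ B v p K := by
  unfold fluxSum
  rw [← Finset.sum_add_distrib]
  refine Finset.sum_congr rfl fun ℓ _ => ?_
  rw [flux_add, flux_add]
  ring

lemma fluxSum_smul (κ : ℝ) (B : ℝ → ℝ) (c : ℝ) (u p : Cell M → ℝ) (K : Cell M) :
    fluxSum M κ B (c • u) p K = c * fluxSum M κ B u p K := by
  unfold fluxSum
  rw [Finset.mul_sum]
  refine Finset.sum_congr rfl fun ℓ _ => ?_
  rw [flux_smul, flux_smul]
  ring

end Aux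

/-- existence, uniqueness, positivity and mass conservation for the
linear discrete Fokker–Planck scheme. -/
theorem discrete_fokker_planck_wellposed {d : ℕ} (M : Fin d → ℕ) [∀ ℓ, NeZero (M ℓ)]
    (κ Δt : ℝ) (hκ : 0 < κ) (hΔt : 0 < Δt)
    (B : ℝ → ℝ) (hB : H2 B)
    (p u0 : Cell M → ℝ) (hu0 : ∀ K, 0 ≤ u0 K) (hu0pos : ∃ L, 0 < u0 L) :
    (∃! u : Cell M → ℝ, Step M κ Δt B u0 u p) ∧
    ∀ u : Cell M → ℝ, Step M κ Δt B u0 u p →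
      (∀ K, 0 < u K) ∧
      ∑ K : Cell M, mK M * u K = ∑ K : Cell M, mK M * u0 K := by
  classical
  have hm := mK_pos M
  -- the affine system as a linear map
  let T : (Cell M → ℝ) →ₗ[ℝ] (Cell M → ℝ) :=
    { toFun := fun u K => u K + (Δt / mK M) * fluxSum M κ B u p K
      map_add' := fun u v => by
        funext K
        simp only [Pi.add_apply, fluxSum_add]
        ring
      map_smul' := fun c u => by
        funext K
        simp only [Pi.smul_apply, smul_eq_mul, RingHom.id_apply, fluxSum_smul]
        ring }
  have hTapp : ∀ (u : Cell M → ℝ) (K : Cell M),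
      T u K = u K + (Δt / mK M) * fluxSum M κ B u p K := fun u K => rfl
  have hT : ∀ u : Cell M → ℝ, Step M κ Δt B u0 u p ↔ T u = u0 := by
    intro u
    rw [step_iff M hΔt]
    constructor
    · intro h
      funext K
      rw [hTapp]
      have hK := h K
      field_simp at hK ⊢
      linarith
    · intro h K
      have hK := congrFun h K
      rw [hTapp] at hK
      field_simp at hK ⊢
      linarith
  -- injectivity of T
  have hinj : Function.Injective T := by
    intro a b hab
    have h0 : T (a - b) = 0 := by rw [map_sub, hab, sub_self]
    set w := a - b with hw
    have hstepw : Step M κ Δt B (fun _ => 0) w p := by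
      intro K
      have hK := congrFun h0 K
      rw [hTapp] at hK
      simp only [Pi.zero_apply] at hK
      field_simp at hK ⊢
      linarith
    have hfneg : ∀ K, fluxSum M κ B (-w) p K = - fluxSum M κ B w p K := by
      intro K
      rw [← neg_one_smul ℝ w, fluxSum_smul]
      ring
    have hstepw' : Step M κ Δt B (fun _ => 0) (-w) p := by
      intro K
      have hK := hstepw K
      simp only [Pi.zero_apply] at hK ⊢
      rw [hfneg, Pi.neg_apply]
      field_simp at hK ⊢
      linarith
    have h1 := step_nonneg M hκ hΔt hB hstepw (fun _ => le_refl 0)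
    have h2 := step_nonneg M hκ hΔt hB hstepw' (fun _ => le_refl 0)
    have hw0 : w = 0 := by
      funext K
      simp only [Pi.zero_apply]
      have hA := h1 K
      have hBn := h2 K
      rw [Pi.neg_apply] at hBn
      linarith
    rw [hw] at hw0
    exact sub_eq_zero.1 hw0
  have hsurj : Function.Surjective T := LinearMap.injective_iff_surjective.1 hinj
  obtain ⟨u, hu⟩ := hsurj u0
  constructor
  · exact ⟨u, (hT u).2 hu, fun y hy => hinj (by rw [(hT y).1 hy, hu])⟩
  · intro v hv
    refine ⟨step_pos M hκ hΔt hB hv hu0 hu0pos, ?_⟩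
    have h := (step_iff M hΔt).1 hv
    have hsum : ∑ K : Cell M, mK M * v K - ∑ K : Cell M, mK M * u0 K = 0 := by
      rw [← Finset.sum_sub_distrib]
      have heach : ∀ K ∈ Finset.univ, mK M * v K - mK M * u0 K
          = -Δt * fluxSum M κ B v p K := by
        intro K _
        have hK := h K
        linarith [h K, mul_sub (mK M) (v K) (u0 K)]
      rw [Finset.sum_congr rfl heach, ← Finset.mul_sum, total_fluxSum, mul_zero]
    linarith

end SG
end

section
/- On the Cartesian torus grid, let κ > 0, Δt > 0, and let B satisfy hypothesis (H2). Suppose u^{k−1}_i : G → [0,∞), u^k_i : G → (0,∞) and p^k_i : G → ℝ (i = 1,…,n) satisfy one implicit Euler finite-volume step with prescribed potentials. Then the discrete Boltzmann entropy inequality holds: (1/Δt)·(H_B(u^k) − H_B(u^{k−1})) + P_B(u^k, p^k) ≤ −X(u^k, p^k). -/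
/-! Test the scheme with `log u`. Convexity of `s ↦ s (log s - 1)` bounds the entropy change by
`m(K) (u - u_prev) log u / Δt = -(∑_σ F_{K,σ}) log u`. The fluxes are antisymmetric, so summation by
parts on the torus turns this into `∑_σ F_{K,σ} (log u(K) - log u(L))`. On each edge the diffusive
part of the flux yields `4 B_κ |D_σ √u|²` because `4 (√b - √a)² ≤ (b - a)(log b - log a)` (the
logarithmic mean lies below the arithmetic mean), and the upwind part yields `D p · D u` because
the upwind value `û` bounds the logarithmic mean of `u(K), u(L)` from the side matching the sign
of `D p`. -/

open MeasureTheory Real Finset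

namespace SG

variable {d : ℕ}

theorem two_mul_sub_one_le_add_one_mul_log {t : ℝ} (ht : 1 ≤ t) :
    2 * (t - 1) ≤ (t + 1) * log t := by
  rcases ht.eq_or_lt with rfl | ht
  · simp
  -- `2x` is the first term of `log t = 2 ∑ₖ x^(2k+1)/(2k+1)`, `x = (t-1)/(t+1)`, a series of nonnegative terms
  have hfirst := le_hasSum (hasSum_log_one_add_inv (inv_pos.2 (sub_pos.2 ht))) 0
    fun k _ => by positivity
  have ht' : 1 + (t - 1)⁻¹⁻¹ = t := by rw [inv_inv]; ring
  have hx : 1 / (2 * (t - 1)⁻¹ + 1) = (t - 1) / (t + 1) := by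
    field_simp
    ring
  rw [ht', hx] at hfirst
  norm_num at hfirst
  calc 2 * (t - 1) = (t + 1) * (2 * ((t - 1) / (t + 1))) := by field_simp
    _ ≤ (t + 1) * log t := by gcongr

theorem two_mul_sq_sub_le_sq_sub_sq_mul_log_sub {x y : ℝ} (hx : 0 < x) (hy : 0 < y) :
    2 * (y - x) ^ 2 ≤ (y ^ 2 - x ^ 2) * (log y - log x) := by
  wlog hxy : x ≤ y generalizing x y
  · linarith [this hy hx (le_of_not_ge hxy)]
  obtain ⟨t, ht, rfl⟩ : ∃ t, 1 ≤ t ∧ y = t * x :=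
    ⟨y / x, (one_le_div hx).2 hxy, (div_mul_cancel₀ y hx.ne').symm⟩
  rw [log_mul (by positivity) hx.ne', add_sub_cancel_right]
  have := mul_le_mul_of_nonneg_left (two_mul_sub_one_le_add_one_mul_log ht)
    (mul_nonneg (sq_nonneg x) (sub_nonneg.2 ht))
  linear_combination this

theorem four_mul_sq_sqrt_sub_le {a b : ℝ} (ha : 0 < a) (hb : 0 < b) :
    4 * (√b - √a) ^ 2 ≤ (b - a) * (log b - log a) := by
  have h := two_mul_sq_sub_le_sq_sub_sq_mul_log_sub (sqrt_pos.2 ha) (sqrt_pos.2 hb)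
  rw [sq_sqrt hb.le, sq_sqrt ha.le, log_sqrt hb.le, log_sqrt ha.le] at h
  linarith

theorem mul_log_sub_log_le_sub {a b : ℝ} (ha : 0 ≤ a) (hb : 0 < b) :
    a * (log b - log a) ≤ b - a := by
  rcases ha.eq_or_lt with rfl | ha
  · simpa using hb.le
  have h := mul_le_mul_of_nonneg_left (log_le_sub_one_of_pos (div_pos hb ha)) ha.le
  rwa [log_div hb.ne' ha.ne', mul_sub_one, mul_div_cancel₀ b ha.ne'] at h

theorem entropy_density_sub_le {a b : ℝ} (ha : 0 ≤ a) (hb : 0 < b) :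
    b * (log b - 1) - a * (log a - 1) ≤ (b - a) * log b := by
  linarith [mul_log_sub_log_le_sub ha hb]

theorem mul_sub_le_upwind_mul_log_sub {a b : ℝ} (q : ℝ) (ha : 0 < a) (hb : 0 < b) :
    q * (b - a) ≤ (if 0 ≤ q then b else a) * q * (log b - log a) := by
  split_ifs with hq
  · nlinarith [mul_log_sub_log_le_sub hb.le ha]
  · nlinarith [mul_log_sub_log_le_sub ha.le hb]

theorem mK_nonneg (M : Fin d → ℕ) : 0 ≤ mK M :=
  prod_nonneg fun _ _ => inv_nonneg.2 (Nat.cast_nonneg _)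

theorem τ_nonneg (M : Fin d → ℕ) (ℓ : Fin d) : 0 ≤ τ M ℓ :=
  mul_nonneg (mK_nonneg M) (sq_nonneg _)

theorem Bk_nonneg {κ : ℝ} (hκ : 0 ≤ κ) {B : ℝ → ℝ} (hB : ∀ s, 0 ≤ s → 0 ≤ B s) {s : ℝ}
    (hs : 0 ≤ s) : 0 ≤ Bk κ B s :=
  mul_nonneg hκ (hB _ (div_nonneg hs hκ))

theorem shift_eq_add_single (M : Fin d → ℕ) (K : Cell M) (ℓ : Fin d) (s : ℤ) :
    shift M K ℓ s = K + Pi.single ℓ (s : ZMod (M ℓ)) := by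
  ext m
  rcases eq_or_ne m ℓ with rfl | h
  · simp [shift]
  · simp [shift, h]

theorem flux_swap (M : Fin d → ℕ) (κ : ℝ) (B : ℝ → ℝ) (u p : Cell M → ℝ)
    (ℓ : Fin d) (K L : Cell M) :
    flux M κ B u p ℓ L K = -flux M κ B u p ℓ K L := by
  unfold flux upw
  rw [abs_sub_comm (p K)]
  rcases lt_trichotomy (p L) (p K) with h | h | h
  · rw [if_pos (by linarith), if_neg (by linarith)]; ring
  · rw [h]; ring
  · rw [if_neg (by linarith), if_pos (by linarith)]; ring

theorem sum_add_sub_mul_eq_sum_mul_sub {G : Type*} [AddCommGroup G] [Fintype G]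
    (F : G → G → ℝ) (hF : ∀ K L, F L K = -F K L) (e : G) (φ : G → ℝ) :
    ∑ K, (F K (K + e) + F K (K - e)) * φ K = ∑ K, F K (K + e) * (φ K - φ (K + e)) := by
  have hback : ∑ K, F K (K - e) * φ K = ∑ K, -(F K (K + e) * φ (K + e)) :=
    calc ∑ K, F K (K - e) * φ K = ∑ K, F (K + e) (K + e - e) * φ (K + e) :=
          (Equiv.sum_comp (Equiv.addRight e) fun K => F K (K - e) * φ K).symm
      _ = _ := by simp [hF (_ + e)]
  simp only [add_mul, sum_add_distrib, hback, mul_sub, sum_sub_distrib, sum_neg_distrib]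
  ring

theorem sum_fluxSum_mul (M : Fin d → ℕ) [∀ ℓ, NeZero (M ℓ)] (κ : ℝ) (B : ℝ → ℝ)
    (u p φ : Cell M → ℝ) :
    ∑ K, fluxSum M κ B u p K * φ K =
      ∑ K, ∑ ℓ, flux M κ B u p ℓ K (shift M K ℓ 1) * (φ K - φ (shift M K ℓ 1)) := by
  simp only [fluxSum, sum_mul]
  rw [sum_comm]
  conv_rhs => rw [sum_comm]
  refine sum_congr rfl fun ℓ _ => ?_
  simp only [shift_eq_add_single, Int.cast_one, Int.cast_neg, Pi.single_neg, ← sub_eq_add_neg]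
  exact sum_add_sub_mul_eq_sum_mul_sub _ (flux_swap M κ B u p ℓ) _ φ

theorem production_le_flux_mul_log_sub (M : Fin d → ℕ) (ℓ : Fin d) {κ : ℝ} (hκ : 0 ≤ κ)
    {B : ℝ → ℝ} (hB : ∀ s, 0 ≤ s → 0 ≤ B s) (u p : Cell M → ℝ) {K L : Cell M}
    (hK : 0 < u K) (hL : 0 < u L) :
    4 * (τ M ℓ * Bk κ B |p L - p K| * (√(u L) - √(u K)) ^ 2)
        + τ M ℓ * (p L - p K) * (u L - u K)
      ≤ flux M κ B u p ℓ K L * (log (u K) - log (u L)) := by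
  have hdiff := mul_le_mul_of_nonneg_left (four_mul_sq_sqrt_sub_le hK hL)
    (mul_nonneg (τ_nonneg M ℓ) (Bk_nonneg hκ hB (abs_nonneg (p L - p K))))
  have hdrift := mul_le_mul_of_nonneg_left
    (mul_sub_le_upwind_mul_log_sub (p L - p K) hK hL) (τ_nonneg M ℓ)
  unfold flux upw
  linear_combination hdiff + hdrift

theorem entropy_sub_le_neg_sum_fluxSum_mul_log (M : Fin d → ℕ) [∀ ℓ, NeZero (M ℓ)]
    {κ Δt : ℝ} (hΔt : 0 < Δt) {B : ℝ → ℝ} {uPrev u p : Cell M → ℝ}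
    (hprev : ∀ K, 0 ≤ uPrev K) (hpos : ∀ K, 0 < u K) (hstep : Step M κ Δt B uPrev u p) :
    ∑ K, (1 / Δt) * (mK M * (u K * (log (u K) - 1)) - mK M * (uPrev K * (log (uPrev K) - 1)))
      ≤ -∑ K, fluxSum M κ B u p K * log (u K) := by
  rw [← sum_neg_distrib]
  refine sum_le_sum fun K _ => ?_
  have hflux : fluxSum M κ B u p K = -(mK M * (u K - uPrev K) / Δt) := by
    linarith [hstep K]
  have hconv := mul_le_mul_of_nonneg_left (entropy_density_sub_le (hprev K) (hpos K))
    (div_nonneg (mK_nonneg M) hΔt.le)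
  rw [hflux]
  linear_combination hconv

theorem sum_production_le_sum_fluxSum_mul_log (M : Fin d → ℕ) [∀ ℓ, NeZero (M ℓ)]
    {κ : ℝ} (hκ : 0 ≤ κ) {B : ℝ → ℝ} (hB : ∀ s, 0 ≤ s → 0 ≤ B s) (u p : Cell M → ℝ)
    (hpos : ∀ K, 0 < u K) :
    ∑ K, ∑ ℓ, (4 * (τ M ℓ * Bk κ B |p (shift M K ℓ 1) - p K| *
          (√(u (shift M K ℓ 1)) - √(u K)) ^ 2)
        + τ M ℓ * (p (shift M K ℓ 1) - p K) * (u (shift M K ℓ 1) - u K))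
      ≤ ∑ K, fluxSum M κ B u p K * log (u K) := by
  rw [sum_fluxSum_mul]
  exact sum_le_sum fun K _ => sum_le_sum fun ℓ _ =>
    production_le_flux_mul_log_sub M ℓ hκ hB u p (hpos K) (hpos _)

/-- discrete Boltzmann entropy inequality. -/
theorem discrete_boltzmann_entropy_inequality {d n : ℕ} (M : Fin d → ℕ)
    [∀ ℓ, NeZero (M ℓ)]
    (κ Δt : ℝ) (hκ : 0 < κ) (hΔt : 0 < Δt)
    (B : ℝ → ℝ) (hB : H2 B)
    (uprev u p : Fin n → Cell M → ℝ)
    (hprev : ∀ i K, 0 ≤ uprev i K) (hpos : ∀ i K, 0 < u i K)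
    (hstep : ∀ i, Step M κ Δt B (uprev i) (u i) (p i)) :
    (1/Δt) * (HB M u - HB M uprev) + PB M κ B u p ≤ - Xc M u p := by
  have hB_nonneg : ∀ s, 0 ≤ s → 0 ≤ B s := fun s hs => (hB.2 s hs).1.le
  have hentropy : (1 / Δt) * (HB M u - HB M uprev)
      ≤ -∑ i, ∑ K, fluxSum M κ B (u i) (p i) K * log (u i K) := by
    simp only [HB, ← sum_sub_distrib, mul_sum]
    rw [← sum_neg_distrib]
    exact sum_le_sum fun i _ =>
      entropy_sub_le_neg_sum_fluxSum_mul_log M hΔt (hprev i) (hpos i) (hstep i)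
  have hproduction : PB M κ B u p + Xc M u p
      ≤ ∑ i, ∑ K, fluxSum M κ B (u i) (p i) K * log (u i K) := by
    simp only [PB, Xc, mul_sum, ← sum_add_distrib]
    exact sum_le_sum fun i _ =>
      sum_production_le_sum_fluxSum_mul_log M hκ.le hB_nonneg (u i) (p i) (hpos i)
  linarith

end SG
end
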